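/- arXiv:1409.8093 — 2 statements merged into one kernel-verified Lean document; each statement's English description precedes it below -/
import Mathlib

section
/- The sorting index sor is Mahonian on S_n: the sum over σ ∈ S_n of q^{sor(σ)} equals the sum over σ ∈ S_n of q^{inv(σ)}, both equal to the product over i from 1 to n of [i]_q. -/
/-- The number of inversions of `σ ∈ S_n`. -/
noncomputable def invStat {n : ℕ} (σ : Equiv.Perm (Fin n)) : ℕ :=
  {p : Fin n × Fin n | p.1 < p.2 ∧ σ p.2 < σ p.1}.ncard

open Equiv Finset

lemma invStat_eq_card {n : ℕ} (σ : Equiv.Perm (Fin n)) :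
    invStat σ
      = (Finset.univ.filter fun p : Fin n × Fin n => p.1 < p.2 ∧ σ p.2 < σ p.1).card := by
  rw [invStat, Set.ncard_eq_toFinset_card']
  simp [Set.toFinset_setOf]

/-- Insert `p` as the image of the last position. -/
def insPerm {n : ℕ} (e : Equiv.Perm (Fin n)) (p : Fin (n + 1)) : Equiv.Perm (Fin (n + 1)) :=
  finSuccEquivLast.trans ((Equiv.optionCongr e).trans (finSuccEquiv' p).symm)

@[simp] lemma insPerm_last {n : ℕ} (e : Equiv.Perm (Fin n)) (p : Fin (n + 1)) :
    insPerm e p (Fin.last n) = p := by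
  simp [insPerm]

@[simp] lemma insPerm_castSucc {n : ℕ} (e : Equiv.Perm (Fin n)) (p : Fin (n + 1)) (i : Fin n) :
    insPerm e p (Fin.castSucc i) = p.succAbove (e i) := by
  simp [insPerm]

lemma insPerm_bijective {n : ℕ} :
    Function.Bijective (fun ep : Equiv.Perm (Fin n) × Fin (n + 1) => insPerm ep.1 ep.2) := by
  rw [Fintype.bijective_iff_injective_and_card]
  constructor
  · rintro ⟨e, p⟩ ⟨e', p'⟩ h
    simp only at h
    have hp : p = p' := by
      have := congrArg (fun σ : Equiv.Perm (Fin (n+1)) => σ (Fin.last n)) h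
      simpa using this
    subst hp
    have he : e = e' := by
      ext i
      have := congrArg (fun σ : Equiv.Perm (Fin (n+1)) => σ (Fin.castSucc i)) h
      simp only [insPerm_castSucc] at this
      exact congrArg Fin.val (Fin.succAbove_right_injective this)
    simp [he]
  · simp [Fintype.card_perm, Nat.factorial_succ, mul_comm]

lemma card_filter_le_val {n : ℕ} (k : ℕ) :
    ((Finset.univ : Finset (Fin n)).filter fun v => k ≤ v.val).card = n - k := by
  have h1 : ((Finset.univ : Finset (Fin n)).filter fun v => k ≤ v.val).card
      = ((Finset.Iio n).filter fun v => k ≤ v).card := by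
    rw [← Fin.map_valEmbedding_univ, Finset.filter_map, Finset.card_map]
    rfl
  rw [h1]
  have : (Finset.Iio n).filter (fun v => k ≤ v) = Finset.Ico k n := by
    ext x
    simp [Finset.mem_Iio, Finset.mem_Ico, and_comm]
  rw [this, Nat.card_Ico]

lemma invStat_insPerm {n : ℕ} (e : Equiv.Perm (Fin n)) (p : Fin (n + 1)) :
    invStat (insPerm e p) = invStat e + (n - p.val) := by
  classical
  set σ := insPerm e p with hσ
  rw [invStat_eq_card]
  set S := (Finset.univ.filter fun pr : Fin (n+1) × Fin (n+1) =>
      pr.1 < pr.2 ∧ σ pr.2 < σ pr.1) with hS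
  rw [← Finset.card_filter_add_card_filter_not (p := fun pr => pr.2 = Fin.last n)
    (s := S), add_comm]
  have hmem : ∀ pr : Fin (n+1) × Fin (n+1), pr ∈ S ↔ pr.1 < pr.2 ∧ σ pr.2 < σ pr.1 := by
    intro pr; simp [hS]
  have hA : (S.filter fun pr => pr.2 = Fin.last n).card = n - p.val := by
    rw [← card_filter_le_val (n := n) p.val]
    have hlt : ∀ pr : Fin (n+1) × Fin (n+1), pr ∈ S.filter (fun pr => pr.2 = Fin.last n) →
        pr.1.val < n := by
      intro pr hpr
      rw [Finset.mem_filter] at hpr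
      have h1 := ((hmem pr).mp hpr.1).1
      have h2 := hpr.2
      have hv := Fin.lt_def.mp h1
      have h2v : pr.2.val = n := by rw [h2]; rfl
      omega
    apply Finset.card_bij (fun pr hpr => e (pr.1.castLT (hlt pr hpr)))
    · intro pr hpr
      rw [Finset.mem_filter] at hpr ⊢
      refine ⟨Finset.mem_univ _, ?_⟩
      obtain ⟨hpr1, hlast⟩ := hpr
      obtain ⟨hlt12, hσlt⟩ := (hmem pr).mp hpr1
      rw [hlast] at hσlt
      have h1 : pr.1 = Fin.castSucc (pr.1.castLT (hlt pr (Finset.mem_filter.mpr ⟨hpr1, hlast⟩))) :=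
        (Fin.castSucc_castLT _ _).symm
      rw [insPerm_last (e := e) (p := p), h1, insPerm_castSucc] at hσlt
      have := (Fin.lt_succAbove_iff_le_castSucc p _).mp hσlt
      simpa [Fin.le_def] using this
    · intro a ha b hb hab
      have hv := congrArg Fin.val (e.injective hab)
      rw [Finset.mem_filter] at ha hb
      exact Prod.ext (Fin.ext hv) (ha.2.trans hb.2.symm)
    · intro v hv
      rw [Finset.mem_filter] at hv
      refine ⟨(Fin.castSucc (e.symm v), Fin.last n), ?_, ?_⟩
      · rw [Finset.mem_filter]
        refine ⟨(hmem _).mpr ⟨Fin.castSucc_lt_last _, ?_⟩, rfl⟩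
        simp only [hσ, insPerm_last, insPerm_castSucc, Equiv.apply_symm_apply]
        exact (Fin.lt_succAbove_iff_le_castSucc p _).mpr (by simpa [Fin.le_def] using hv.2)
      · simp only
        ext
        simp
  have hB : (S.filter fun pr => ¬ pr.2 = Fin.last n).card = invStat e := by
    rw [invStat_eq_card]
    have hlt : ∀ pr : Fin (n+1) × Fin (n+1), pr ∈ S.filter (fun pr => ¬ pr.2 = Fin.last n) →
        pr.1.val < n ∧ pr.2.val < n := by
      intro pr hpr
      rw [Finset.mem_filter] at hpr
      have h1 := ((hmem pr).mp hpr.1).1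
      have h2 : pr.2.val < n := Fin.val_lt_last hpr.2
      exact ⟨lt_trans h1 h2, h2⟩
    apply Finset.card_bij (fun pr hpr =>
      ((pr.1.castLT (hlt pr hpr).1, pr.2.castLT (hlt pr hpr).2) : Fin n × Fin n))
    · intro pr hpr
      rw [Finset.mem_filter]
      refine ⟨Finset.mem_univ _, ?_, ?_⟩
      · exact ((hmem pr).mp (Finset.mem_filter.mp hpr).1).1
      · have hσlt := ((hmem pr).mp (Finset.mem_filter.mp hpr).1).2
        have k1 : σ pr.1 = p.succAbove (e (pr.1.castLT (hlt pr hpr).1)) := by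
          rw [← insPerm_castSucc, Fin.castSucc_castLT, hσ]
        have k2 : σ pr.2 = p.succAbove (e (pr.2.castLT (hlt pr hpr).2)) := by
          rw [← insPerm_castSucc, Fin.castSucc_castLT, hσ]
        rw [k1, k2] at hσlt
        exact Fin.succAbove_lt_succAbove_iff.mp hσlt
    · intro a ha b hb hab
      have h1 := congrArg (fun x : Fin n × Fin n => x.1.val) hab
      have h2 := congrArg (fun x : Fin n × Fin n => x.2.val) hab
      exact Prod.ext (Fin.ext h1) (Fin.ext h2)
    · intro b hb
      rw [Finset.mem_filter] at hb
      refine ⟨(Fin.castSucc b.1, Fin.castSucc b.2), ?_, ?_⟩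
      · rw [Finset.mem_filter]
        refine ⟨(hmem _).mpr ⟨?_, ?_⟩, ?_⟩
        · exact Fin.castSucc_lt_castSucc_iff.mpr hb.2.1
        · simp only [hσ, insPerm_castSucc]
          exact Fin.succAbove_lt_succAbove_iff.mpr hb.2.2
        · exact ne_of_lt (Fin.castSucc_lt_last _)
      · simp only
        ext <;> simp
  rw [hA, hB]

lemma sum_pow_sub_val {n : ℕ} {R : Type*} [CommRing R] (q : R) :
    ∑ p : Fin (n + 1), q ^ (n - p.val) = ∑ j ∈ Finset.range (n + 1), q ^ j := by
  rw [Fin.sum_univ_eq_sum_range (fun j => q ^ (n - j))]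
  calc ∑ j ∈ Finset.range (n+1), q ^ (n - j)
      = ∑ j ∈ Finset.range (n+1), (fun k => q ^ k) (n + 1 - 1 - j) := by
        apply Finset.sum_congr rfl; intro j _; simp
    _ = ∑ j ∈ Finset.range (n+1), q ^ j := Finset.sum_range_reflect (fun k => q ^ k) (n+1)

lemma inv_gen (n : ℕ) (R : Type*) [CommRing R] (q : R) :
    ∑ σ : Equiv.Perm (Fin n), q ^ invStat σ
      = ∏ i ∈ Finset.range n, ∑ j ∈ Finset.range (i + 1), q ^ j := by
  induction n with
  | zero =>
    have h0 : ∀ σ : Equiv.Perm (Fin 0), invStat σ = 0 := by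
      intro σ
      rw [invStat_eq_card]
      simp [Finset.filter_eq_empty_iff]
    simp [h0]
  | succ n ih =>
    rw [Finset.prod_range_succ, ← ih, ← sum_pow_sub_val (n := n) q]
    rw [← Fintype.sum_bijective _ insPerm_bijective
      (fun ep : Equiv.Perm (Fin n) × Fin (n+1) => q ^ invStat (insPerm ep.1 ep.2))
      (fun σ => q ^ invStat σ) (fun ep => rfl)]
    rw [Fintype.sum_prod_type]
    rw [Finset.sum_mul_sum]
    apply Finset.sum_congr rfl; intro e _
    apply Finset.sum_congr rfl; intro p _
    rw [invStat_insPerm, pow_add]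

section Sor

variable {n : ℕ}

/-- The list of transpositions corresponding to a subexceedant code. -/
def swapList (c : ∀ i : Fin n, Fin (i.val + 1)) : List (Fin n × Fin n) :=
  (List.finRange n).map fun j => (Fin.castLE j.isLt (c j), j)

@[simp] lemma swapList_length (c : ∀ i : Fin n, Fin (i.val + 1)) :
    (swapList c).length = n := by simp [swapList]

lemma swapList_getElem (c : ∀ i : Fin n, Fin (i.val + 1)) (i : ℕ) (h : i < (swapList c).length) :
    (swapList c)[i] =
      (Fin.castLE (Fin.isLt (⟨i, by simpa using h⟩ : Fin n)) (c ⟨i, by simpa using h⟩),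
        (⟨i, by simpa using h⟩ : Fin n)) := by
  have hf : (List.finRange n)[i]'(by simpa using h) = ⟨i, by simpa using h⟩ := by simp
  simp only [swapList, List.getElem_map]
  rw [hf]

lemma prod_swap_fix (l : List (Fin n × Fin n)) (k : ℕ)
    (hl : ∀ p ∈ l, p.1.val < k ∧ p.2.val < k) (x : Fin n) (hx : k ≤ x.val) :
    (l.map fun p => Equiv.swap p.1 p.2).prod x = x := by
  induction l with
  | nil => simp
  | cons a t ih =>
    simp only [List.map_cons, List.prod_cons, Equiv.Perm.mul_apply]
    rw [ih (fun p hp => hl p (List.mem_cons_of_mem _ hp))]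
    apply Equiv.swap_apply_of_ne_of_ne
    · intro h
      have h1 := (hl a (List.mem_cons_self)).1
      have := congrArg Fin.val h
      omega
    · intro h
      have h1 := (hl a (List.mem_cons_self)).2
      have := congrArg Fin.val h
      omega

/-- Partial products of the swap list. -/
def pprod (c : ∀ i : Fin n, Fin (i.val + 1)) (k : ℕ) : Equiv.Perm (Fin n) :=
  (((swapList c).take k).map fun p => Equiv.swap p.1 p.2).prod

lemma pprod_fix (c : ∀ i : Fin n, Fin (i.val + 1)) (k : ℕ) (x : Fin n) (hx : k ≤ x.val) :
    pprod c k x = x := by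
  apply prod_swap_fix _ k _ x hx
  intro p hp
  obtain ⟨i, hi, hik, hget⟩ : ∃ i, ∃ h' : i < (swapList c).length, i < k ∧ (swapList c)[i] = p := by
    obtain ⟨i, hi, hx'⟩ := List.mem_iff_getElem.mp hp
    rw [List.length_take] at hi
    refine ⟨i, by simp; omega, by omega, ?_⟩
    rw [← hx', List.getElem_take]
  rw [swapList_getElem] at hget
  subst hget
  constructor
  · simp only [Fin.coe_castLE]
    exact Nat.lt_of_lt_of_le (c _).isLt hik
  · simpa using hik

lemma pprod_fix_inv (c : ∀ i : Fin n, Fin (i.val + 1)) (k : ℕ) (x : Fin n) (hx : k ≤ x.val) :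
    (pprod c k)⁻¹ x = x := by
  apply (pprod c k).injective
  rw [Equiv.Perm.coe_inv, Equiv.apply_symm_apply, pprod_fix c k x hx]

lemma pprod_succ (c : ∀ i : Fin n, Fin (i.val + 1)) (k : ℕ) (hk : k < n) :
    pprod c (k + 1) = pprod c k *
      Equiv.swap (Fin.castLE hk (c ⟨k, hk⟩)) ⟨k, hk⟩ := by
  unfold pprod
  rw [List.map_take, List.map_take, List.prod_take_succ _ _ (by simpa using hk)]
  congr 1
  rw [List.getElem_map, swapList_getElem]

lemma pprod_recover (c : ∀ i : Fin n, Fin (i.val + 1)) (k : ℕ) (hk : k < n) :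
    (pprod c (k + 1))⁻¹ ⟨k, hk⟩ = Fin.castLE hk (c ⟨k, hk⟩) := by
  rw [pprod_succ c k hk, mul_inv_rev, Equiv.Perm.mul_apply, Equiv.swap_inv,
    pprod_fix_inv c k _ (le_refl k), Equiv.swap_apply_right]

lemma pprod_inj (c c' : ∀ i : Fin n, Fin (i.val + 1)) (h : pprod c n = pprod c' n) :
    ∀ m k, k + m = n → pprod c k = pprod c' k ∧ ∀ j : Fin n, k ≤ j.val → c j = c' j := by
  intro m
  induction m with
  | zero =>
    intro k hk
    constructor
    · rw [show k = n by omega, h]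
    · intro j hj
      exact absurd j.isLt (by omega)
  | succ m ih =>
    intro k hk
    obtain ⟨h1, h2⟩ := ih (k + 1) (by omega)
    have hkn : k < n := by omega
    have hc : Fin.castLE hkn (c ⟨k, hkn⟩) = Fin.castLE hkn (c' ⟨k, hkn⟩) := by
      rw [← pprod_recover c k hkn, ← pprod_recover c' k hkn, h1]
    have hck : c ⟨k, hkn⟩ = c' ⟨k, hkn⟩ := Fin.castLE_injective _ hc
    constructor
    · have e1 := pprod_succ c k hkn
      have e2 := pprod_succ c' k hkn
      rw [hck] at e1
      rw [h1, e2] at e1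
      exact mul_right_cancel e1.symm
    · intro j hj
      rcases Nat.eq_or_lt_of_le hj with heq | hlt
      · have hjk : j = ⟨k, hkn⟩ := Fin.ext heq.symm
        subst hjk
        exact hck
      · exact h2 j hlt

end Sor

section Sor2

variable {n : ℕ}

/-- The permutation encoded by a subexceedant code. -/
def Fc (c : ∀ i : Fin n, Fin (i.val + 1)) : Equiv.Perm (Fin n) :=
  ((swapList c).map fun p => Equiv.swap p.1 p.2).prod

lemma Fc_eq_pprod (c : ∀ i : Fin n, Fin (i.val + 1)) : Fc c = pprod c n := by
  unfold Fc pprod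
  rw [List.take_of_length_le (le_of_eq (swapList_length c))]

lemma Fc_bijective : Function.Bijective (Fc (n := n)) := by
  rw [Fintype.bijective_iff_injective_and_card]
  constructor
  · intro c c' h
    funext j
    refine (pprod_inj c c' ?_ n 0 (by omega)).2 j (Nat.zero_le _)
    rw [← Fc_eq_pprod, ← Fc_eq_pprod, h]
  · rw [Fintype.card_pi, Fintype.card_perm, Fintype.card_fin]
    simp only [Fintype.card_fin]
    rw [Fin.prod_univ_eq_prod_range (fun i => i + 1), Finset.prod_range_add_one_eq_factorial]

lemma filter_map_prod_swap (l : List (Fin n × Fin n)) :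
    ((l.filter fun p => p.1 ≠ p.2).map fun p => Equiv.swap p.1 p.2).prod
      = (l.map fun p => Equiv.swap p.1 p.2).prod := by
  induction l with
  | nil => rfl
  | cons a t ih =>
    by_cases ha : a.1 = a.2
    · rw [List.filter_cons_of_neg (by simp [ha]), List.map_cons, List.prod_cons, ih, ha]
      simp
      rfl
    · rw [List.filter_cons_of_pos (by simp [ha]), List.map_cons, List.prod_cons, ih,
        List.map_cons, List.prod_cons]

lemma filter_map_sum_sub (l : List (Fin n × Fin n)) :
    ((l.filter fun p => p.1 ≠ p.2).map fun p => p.2.val - p.1.val).sum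
      = (l.map fun p => p.2.val - p.1.val).sum := by
  induction l with
  | nil => rfl
  | cons a t ih =>
    by_cases ha : a.1 = a.2
    · rw [List.filter_cons_of_neg (by simp [ha]), List.map_cons, List.sum_cons, ih, ha]
      simp
    · rw [List.filter_cons_of_pos (by simp [ha]), List.map_cons, List.sum_cons, ih,
        List.map_cons, List.sum_cons]

lemma swapList_mem_le (c : ∀ i : Fin n, Fin (i.val + 1)) :
    ∀ p ∈ swapList c, p.1.val ≤ p.2.val := by
  intro p hp
  simp only [swapList, List.mem_map] at hp
  obtain ⟨j, _, rfl⟩ := hp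
  simp only [Fin.coe_castLE]
  exact Nat.lt_succ_iff.mp (c j).isLt

lemma swapList_map_snd (c : ∀ i : Fin n, Fin (i.val + 1)) :
    (swapList c).map Prod.snd = List.finRange n := by
  simp [swapList, List.map_map, Function.comp_def]

lemma swapList_map_sub (c : ∀ i : Fin n, Fin (i.val + 1)) :
    ((swapList c).map fun p => p.2.val - p.1.val)
      = (List.finRange n).map fun j => j.val - (c j).val := by
  simp [swapList, List.map_map, Function.comp_def]

end Sor2

/-- The sorting index `sor` is Mahonian: if `sor σ = Σ_s (j_s - i_s)` for the
unique factorization `σ = (i_1 j_1)⋯(i_k j_k)` with `j_1 < ⋯ < j_k`, `i_s < j_s`,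
then `Σ_σ q^{sor σ} = Σ_σ q^{inv σ} = ∏_{i=1}^n [i]_q`. -/
theorem sor_is_Mahonian (n : ℕ) (sor : Equiv.Perm (Fin n) → ℕ)
    (hsor : ∀ (σ : Equiv.Perm (Fin n)) (l : List (Fin n × Fin n)),
      (∀ p ∈ l, p.1 < p.2) →
      (l.map Prod.snd).Pairwise (· < ·) →
      (l.map fun p => Equiv.swap p.1 p.2).prod = σ →
      sor σ = (l.map fun p => p.2.val - p.1.val).sum)
    (R : Type*) [CommRing R] (q : R) :
    (∑ σ : Equiv.Perm (Fin n), q ^ sor σ = ∑ σ : Equiv.Perm (Fin n), q ^ invStat σ) ∧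
    ∑ σ : Equiv.Perm (Fin n), q ^ sor σ =
      ∏ i ∈ Finset.range n, ∑ j ∈ Finset.range (i + 1), q ^ j := by

  classical
  have sor_eq : ∀ c : (∀ i : Fin n, Fin (i.val + 1)),
      sor (Fc c) = ∑ j : Fin n, (j.val - (c j).val) := by
    intro c
    rw [hsor (Fc c) ((swapList c).filter fun p => p.1 ≠ p.2) ?_ ?_ ?_]
    · rw [filter_map_sum_sub, swapList_map_sub, Fin.sum_univ_def]
    · intro p hp
      rw [List.mem_filter] at hp
      have hle := swapList_mem_le c p hp.1
      have hne : p.1 ≠ p.2 := of_decide_eq_true hp.2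
      exact Fin.lt_def.mpr (lt_of_le_of_ne hle fun h => hne (Fin.ext h))
    · have hsub := (List.filter_sublist (p := fun p => decide (p.1 ≠ p.2)) (l := swapList c)).map
        Prod.snd
      rw [swapList_map_snd] at hsub
      exact List.Pairwise.sublist hsub (List.pairwise_lt_finRange n)
    · exact (filter_map_prod_swap (swapList c)).symm ▸ rfl
  have key : ∑ σ : Equiv.Perm (Fin n), q ^ sor σ
      = ∏ i ∈ Finset.range n, ∑ j ∈ Finset.range (i + 1), q ^ j := by
    rw [← Fintype.sum_bijective Fc Fc_bijective
      (fun c => q ^ sor (Fc c)) (fun σ => q ^ sor σ) (fun c => rfl)]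
    calc ∑ c : (∀ i : Fin n, Fin (i.val + 1)), q ^ sor (Fc c)
        = ∑ c : (∀ i : Fin n, Fin (i.val + 1)), ∏ j : Fin n, q ^ (j.val - (c j).val) := by
          apply Finset.sum_congr rfl
          intro c _
          rw [sor_eq c, Finset.prod_pow_eq_pow_sum]
      _ = ∏ j : Fin n, ∑ x : Fin (j.val + 1), q ^ (j.val - x.val) := by
          rw [Finset.prod_univ_sum (fun j : Fin n => (Finset.univ : Finset (Fin (j.val + 1))))
            (fun j x => q ^ (j.val - x.val))]
          rw [Fintype.piFinset_univ]
      _ = ∏ j : Fin n, ∑ k ∈ Finset.range (j.val + 1), q ^ k := by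
          apply Finset.prod_congr rfl
          intro j _
          exact sum_pow_sub_val q
      _ = ∏ i ∈ Finset.range n, ∑ k ∈ Finset.range (i + 1), q ^ k :=
          Fin.prod_univ_eq_prod_range (fun i => ∑ k ∈ Finset.range (i + 1), q ^ k) n
  exact ⟨key.trans (inv_gen n R q).symm, key⟩
end

section
/- In the group algebra of G_{r,n}, define Φ_1 = 1 + (1^{[1]} 1) + ⋯ + (1^{[r-1]} 1) and, for 2 ≤ j ≤ n, Φ_j = 1 + Σ_{i=1}^{j-1}(i j) + Σ_{t=1}^{r-1} Σ_{i=1}^{j} (i^{[t]} j). Then Φ_1 Φ_2 ⋯ Φ_n = Σ_{π ∈ G_{r,n}} π, the sum of all elements of G_{r,n}. -/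
noncomputable section
open scoped Classical

/-- The colored permutation group `G_{r,n} = C_r ≀ S_n`, with elements `(σ, z)`
written in window notation `σ_1^{[z_1]} ⋯ σ_n^{[z_n]}`. -/
structure CPerm (r n : ℕ) where
  perm : Equiv.Perm (Fin n)
  col : Fin n → ZMod r

namespace CPerm

variable {r n : ℕ}

theorem ext' {a b : CPerm r n} (h1 : a.perm = b.perm) (h2 : a.col = b.col) : a = b := by
  cases a; cases b; cases h1; cases h2; rfl

instance : Mul (CPerm r n) :=
  ⟨fun a b => ⟨a.perm * b.perm, fun i => b.col i + a.col (b.perm i)⟩⟩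
instance : One (CPerm r n) := ⟨⟨1, 0⟩⟩
instance : Inv (CPerm r n) := ⟨fun a => ⟨a.perm⁻¹, fun i => - a.col (a.perm⁻¹ i)⟩⟩

@[simp] theorem mul_perm (a b : CPerm r n) : (a * b).perm = a.perm * b.perm := rfl
@[simp] theorem mul_col (a b : CPerm r n) (i : Fin n) :
    (a * b).col i = b.col i + a.col (b.perm i) := rfl
@[simp] theorem one_perm : (1 : CPerm r n).perm = 1 := rfl
@[simp] theorem one_col (i : Fin n) : (1 : CPerm r n).col i = 0 := rfl
@[simp] theorem inv_perm (a : CPerm r n) : (a⁻¹).perm = a.perm⁻¹ := rfl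
@[simp] theorem inv_col (a : CPerm r n) (i : Fin n) :
    (a⁻¹).col i = - a.col (a.perm⁻¹ i) := rfl

instance : Group (CPerm r n) :=
  Group.ofLeftAxioms
    (fun a b c => ext' (mul_assoc _ _ _)
      (by funext i; simp [mul_assoc, add_assoc]))
    (fun a => ext' (one_mul _) (by funext i; simp))
    (fun a => ext' (inv_mul_cancel _) (by funext i; simp))

instance instFintype [NeZero r] : Fintype (CPerm r n) :=
  Fintype.ofEquiv (Equiv.Perm (Fin n) × (Fin n → ZMod r))
    { toFun := fun p => ⟨p.1, p.2⟩
      invFun := fun g => (g.perm, g.col)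
      left_inv := fun _ => rfl
      right_inv := fun _ => rfl }

/-- The window notation letter at position `i`: the pair (base value, color). -/
def window (π : CPerm r n) (i : Fin n) : Fin n × ZMod r := (π.perm i, π.col i)

/-- The action of `π` on the colored letter `x = b^{[c]}`. -/
def actC (π : CPerm r n) (x : Fin n × ZMod r) : Fin n × ZMod r :=
  (π.perm x.1, x.2 + π.col x.1)

/-- The colored transposition `(i^{[t]} j)` (for `i < j`), resp. the coloring
operation `(i^{[t]} i)` when `i = j`. -/
def ct (i : Fin n) (t : ZMod r) (j : Fin n) : CPerm r n :=
  ⟨Equiv.swap i j, fun k => if k = j then t else if k = i then -t else 0⟩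

/-- The generator `s_0`, adding one to the color of the first letter. -/
def s0 (h : 0 < n) : CPerm r n := ⟨1, fun k => if k = ⟨0, h⟩ then 1 else 0⟩

/-- The standard generating set `{s_0, s_1, …, s_{n-1}}` of `G_{r,n}`. -/
def gens : Set (CPerm r n) :=
  {g | (∃ h : 0 < n, g = s0 h) ∨
       ∃ (i : Fin n) (h : i.val + 1 < n), g = ct i 0 ⟨i.val + 1, h⟩}

/-- Word length with respect to a set `S` of generators. -/
def lenWrt (S : Set (CPerm r n)) (π : CPerm r n) : ℕ :=
  sInf {k | ∃ l : List (CPerm r n), l.length = k ∧ (∀ g ∈ l, g ∈ S) ∧ l.prod = π}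

/-- The length function `ℓ` on `G_{r,n}` w.r.t. the generators `s_0, …, s_{n-1}`. -/
def len (π : CPerm r n) : ℕ := lenWrt gens π

/-- The set `T_n` of colored transpositions and coloring operations. -/
def Tset : Set (CPerm r n) :=
  {g | ∃ (i j : Fin n) (t : ZMod r), (i < j ∨ (i = j ∧ t ≠ 0)) ∧ g = ct i t j}

/-- The reflection-type length `ℓ'` on `G_{r,n}`. -/
def lenT (π : CPerm r n) : ℕ := lenWrt Tset π

/-- The linear order `n^{[r-1]} < ⋯ < 1^{[r-1]} < ⋯ < 1^{[1]} < 1 < ⋯ < n`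
on colored letters. -/
def clt (x y : Fin n × ZMod r) : Prop :=
  (x.2 = 0 ∧ y.2 = 0 ∧ x.1 < y.1) ∨ (x.2 ≠ 0 ∧ y.2 = 0) ∨
    (x.2 ≠ 0 ∧ y.2 ≠ 0 ∧ (y.1 < x.1 ∨ (x.1 = y.1 ∧ y.2.val < x.2.val)))

/-- The number of inversions of the window word of `π` w.r.t. the order `clt`. -/
def invStat (π : CPerm r n) : ℕ :=
  {p : Fin n × Fin n | p.1 < p.2 ∧ clt (window π p.2) (window π p.1)}.ncard

/-- `l` is the factorization of `π` into colored transpositions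
`(i_1^{[t_1]} j_1) ⋯ (i_k^{[t_k]} j_k)` with `j_1 < ⋯ < j_k`, each factor being
either a colored transposition (`i < j`, any `t`) or a coloring operation
(`i = j`, `t ≠ 0`). A factor is recorded as the triple `(i, t, j)`. -/
def IsSorFact (π : CPerm r n) (l : List (Fin n × ZMod r × Fin n)) : Prop :=
  (∀ x ∈ l, x.1 < x.2.2 ∨ (x.1 = x.2.2 ∧ x.2.1 ≠ 0)) ∧
  (l.map fun x => x.2.2).Pairwise (· < ·) ∧
  (l.map fun x => ct x.1 x.2.1 x.2.2).prod = π

/-- The contribution `j - i + χ(t > 0)·(2(i-1) + t)` of a factor `(i^{[t]} j)`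
to the sorting index (with `i, j` taken as `1`-based values). -/
def sorTerm (x : Fin n × ZMod r × Fin n) : ℕ :=
  (x.2.2.val - x.1.val) + if x.2.1 ≠ 0 then 2 * x.1.val + x.2.1.val else 0

/-- The refined colored cycle set `Cyc^t(π)`: smallest base values of the
colored cycles of `π` whose color sum is `t`. -/
def CycT (t : ZMod r) (π : CPerm r n) : Set (Fin n) :=
  {i | (∀ j, π.perm.SameCycle i j → i ≤ j) ∧
       (∑ j ∈ Finset.univ.filter fun j => π.perm.SameCycle i j, π.col j) = t}

/-- The Lehmer code of `π`: `Leh(π) i = (h_i, -z_i)` with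
`h_i = #{j ≤ i : σ_j ≤ σ_i}` (so `h_i` is `1`-based). -/
def Leh (π : CPerm r n) (i : Fin n) : ℕ × ZMod r :=
  ({j | j ≤ i ∧ π.perm j ≤ π.perm i}.ncard, - π.col i)

/-- The A-code: `A-code(π) = Leh(π⁻¹)`. -/
def Acode (π : CPerm r n) : Fin n → ℕ × ZMod r := Leh π⁻¹

/-- The smallest `k ≥ 1` such that the base value of `π^{-k}(i)` is at most `i`. -/
def kmin (π : CPerm r n) (i : Fin n) : ℕ :=
  sInf {k | 1 ≤ k ∧ (π⁻¹ ^ k).perm i ≤ i}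

/-- The B-code: `B-code(π) i = π^{-k_i}(i)` as a colored letter. -/
def Bcode (π : CPerm r n) (i : Fin n) : Fin n × ZMod r :=
  actC (π⁻¹ ^ kmin π i) (i, (0 : ZMod r))

/-- Right-to-left minimum letters of color `t` (base values). -/
def RmilT (t : ZMod r) (π : CPerm r n) : Set (Fin n) :=
  {b | ∃ i, π.perm i = b ∧ π.col i = t ∧ ∀ j, i < j → π.perm i < π.perm j}

/-- Left-to-right minimum letters of color `t` (base values). -/
def LmilT (t : ZMod r) (π : CPerm r n) : Set (Fin n) :=
  {b | ∃ i, π.perm i = b ∧ π.col i = t ∧ ∀ j, j < i → π.perm i < π.perm j}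

/-- Left-to-right maximum letters of color `t` (base values). -/
def LmalT (t : ZMod r) (π : CPerm r n) : Set (Fin n) :=
  {b | ∃ i, π.perm i = b ∧ π.col i = t ∧ ∀ j, j < i → π.perm j < π.perm i}

/-- Left-to-right maximum places of color `t`. -/
def LmapT (t : ZMod r) (π : CPerm r n) : Set (Fin n) :=
  {i | π.col i = t ∧ ∀ j, j < i → π.perm j < π.perm i}

/-- Right-to-left minimum letters of `π` (as colored letters). -/
def RmilSet (π : CPerm r n) : Set (Fin n × ZMod r) :=
  {x | ∃ i, window π i = x ∧ ∀ j, i < j → π.perm i < π.perm j}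

/-- Left-to-right minimum letters of `π` (as colored letters). -/
def LmilSet (π : CPerm r n) : Set (Fin n × ZMod r) :=
  {x | ∃ i, window π i = x ∧ ∀ j, j < i → π.perm i < π.perm j}

/-- Left-to-right maximum letters of `π` (as colored letters). -/
def LmalSet (π : CPerm r n) : Set (Fin n × ZMod r) :=
  {x | ∃ i, window π i = x ∧ ∀ j, j < i → π.perm j < π.perm i}

/-- Left-to-right maximum places of `π` (as colored places `i^{[z_i]}`). -/
def LmapSet (π : CPerm r n) : Set (Fin n × ZMod r) :=
  {x | π.col x.1 = x.2 ∧ ∀ j, j < x.1 → π.perm j < π.perm x.1}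

/-- The `k`-th letter `π^k(1)` of the orbit word `π(1) π²(1) π³(1) ⋯`. -/
def orbitWord (π : CPerm r n) (h : 0 < n) (k : ℕ) : Fin n × ZMod r :=
  actC (π ^ k) (⟨0, h⟩, (0 : ZMod r))

/-- `Lmic(π)`: left-to-right minimum letters of the word `π(1) π²(1) π³(1) ⋯`. -/
def LmicSet (π : CPerm r n) : Set (Fin n × ZMod r) :=
  {x | ∃ (h : 0 < n) (k : ℕ), 1 ≤ k ∧ orbitWord π h k = x ∧
        ∀ m, 1 ≤ m → m < k → (orbitWord π h k).1 < (orbitWord π h m).1}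

/-- The color-`t` part of `Lmic(π)`. -/
def LmicT (t : ZMod r) (π : CPerm r n) : Set (Fin n) :=
  {b | (b, t) ∈ LmicSet π}

end CPerm

open CPerm in
/-- The element `Φ_j = 1 + Σ_{i=1}^{j-1} (i j) + Σ_{t=1}^{r-1} Σ_{i=1}^{j} (i^{[t]} j)`
of the integral group algebra of `G_{r,n}`. -/
noncomputable def Phi (r n : ℕ) [NeZero r] (j : Fin n) :
    MonoidAlgebra ℤ (CPerm r n) :=
  1 + (∑ i ∈ Finset.univ.filter (· < j), MonoidAlgebra.of ℤ (CPerm r n) (ct i 0 j)) +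
    ∑ t ∈ Finset.univ.filter (fun t : ZMod r => t ≠ 0),
      ∑ i ∈ Finset.univ.filter (· ≤ j), MonoidAlgebra.of ℤ (CPerm r n) (ct i t j)

namespace CPerm

variable {r n : ℕ}

@[simp] theorem ct_perm (i : Fin n) (t : ZMod r) (j : Fin n) :
    (ct i t j).perm = Equiv.swap i j := rfl

theorem ct_col (i : Fin n) (t : ZMod r) (j : Fin n) (k : Fin n) :
    (ct i t j).col k = if k = j then t else if k = i then -t else 0 := rfl


theorem ct_self_zero (j : Fin n) : ct j (0 : ZMod r) j = 1 := by
  refine ext' ?_ ?_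
  · ext k; simp [ct]
  · funext k
    show (if k = j then (0:ZMod r) else if k = j then -0 else 0) = 0
    split_ifs <;> simp

theorem Phi_eq (r n : ℕ) [NeZero r] (j : Fin n) :
    Phi r n j = ∑ i ∈ Finset.univ.filter (· ≤ j), ∑ t : ZMod r,
      MonoidAlgebra.of ℤ (CPerm r n) (ct i t j) := by
  have hsplit : ∀ i : Fin n, ∑ t : ZMod r, MonoidAlgebra.of ℤ (CPerm r n) (ct i t j)
      = MonoidAlgebra.of ℤ (CPerm r n) (ct i 0 j) +
        ∑ t ∈ Finset.univ.filter (fun t : ZMod r => t ≠ 0),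
          MonoidAlgebra.of ℤ (CPerm r n) (ct i t j) := by
    intro i
    rw [← Finset.sum_filter_add_sum_filter_not Finset.univ (fun t : ZMod r => t = 0)]
    congr 1
    · rw [Finset.filter_eq']
      simp
  have hins : Finset.univ.filter (· ≤ j) = insert j (Finset.univ.filter (· < j)) := by
    ext k
    simp [le_iff_lt_or_eq, or_comm]
  symm
  calc ∑ i ∈ Finset.univ.filter (· ≤ j), ∑ t : ZMod r,
        MonoidAlgebra.of ℤ (CPerm r n) (ct i t j)
      = ∑ i ∈ Finset.univ.filter (· ≤ j),
          (MonoidAlgebra.of ℤ (CPerm r n) (ct i 0 j) +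
            ∑ t ∈ Finset.univ.filter (fun t : ZMod r => t ≠ 0),
              MonoidAlgebra.of ℤ (CPerm r n) (ct i t j)) :=
        Finset.sum_congr rfl fun i _ => hsplit i
    _ = (∑ i ∈ Finset.univ.filter (· ≤ j), MonoidAlgebra.of ℤ (CPerm r n) (ct i 0 j)) +
          ∑ i ∈ Finset.univ.filter (· ≤ j),
            ∑ t ∈ Finset.univ.filter (fun t : ZMod r => t ≠ 0),
              MonoidAlgebra.of ℤ (CPerm r n) (ct i t j) := Finset.sum_add_distrib
    _ = (1 + ∑ i ∈ Finset.univ.filter (· < j), MonoidAlgebra.of ℤ (CPerm r n) (ct i 0 j)) +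
          ∑ t ∈ Finset.univ.filter (fun t : ZMod r => t ≠ 0),
            ∑ i ∈ Finset.univ.filter (· ≤ j),
              MonoidAlgebra.of ℤ (CPerm r n) (ct i t j) := by
        rw [Finset.sum_comm]
        congr 1
        rw [hins, Finset.sum_insert (by simp), ct_self_zero, map_one]
    _ = Phi r n j := rfl

/-- The subgroup (as a finset) of colored permutations fixing positions `≥ m` colorlessly. -/
def Hm [NeZero r] (m : ℕ) : Finset (CPerm r n) :=
  Finset.univ.filter (fun π => ∀ k : Fin n, m ≤ k.val → π.perm k = k ∧ π.col k = 0)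

theorem step [NeZero r] (m : ℕ) (hm : m < n) :
    (∑ π ∈ Hm (r := r) (n := n) m, MonoidAlgebra.of ℤ (CPerm r n) π) * Phi r n ⟨m, hm⟩
      = ∑ π ∈ Hm (r := r) (n := n) (m + 1), MonoidAlgebra.of ℤ (CPerm r n) π := by
  classical
  set j : Fin n := ⟨m, hm⟩ with hj
  rw [Phi_eq]
  simp only [Finset.mul_sum, Finset.sum_mul, ← map_mul]
  rw [← Finset.sum_product', ← Finset.sum_product']
  have hjval : (j : Fin n).val = m := rfl
  have mem_Hm : ∀ (m' : ℕ) (π : CPerm r n), π ∈ Hm (r := r) (n := n) m' ↔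
      ∀ k : Fin n, m' ≤ k.val → π.perm k = k ∧ π.col k = 0 := by
    intro m' π; simp [Hm]
  refine Finset.sum_nbij' (fun p => p.2 * ct p.1.1 p.1.2 j)
    (fun π => ((π.perm⁻¹ j,
        if π.perm⁻¹ j = j then π.col j else -π.col (π.perm⁻¹ j)),
      π * (ct (π.perm⁻¹ j)
        (if π.perm⁻¹ j = j then π.col j else -π.col (π.perm⁻¹ j)) j)⁻¹))
    ?_ ?_ ?_ ?_ ?_
  · -- forward membership
    rintro ⟨⟨i, t⟩, h⟩ hp
    simp only [Finset.mem_product, Finset.mem_filter, Finset.mem_univ, true_and,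
      and_true] at hp
    obtain ⟨hij, hh⟩ := hp
    rw [mem_Hm] at hh ⊢
    intro k hk
    have hkj : j < k := by
      rw [Fin.lt_def, hjval]; omega
    have hk1 : k ≠ i := fun h' => absurd (h' ▸ lt_of_le_of_lt hij hkj) (lt_irrefl _)
    have hk2 : k ≠ j := fun h' => absurd (h' ▸ hkj) (lt_irrefl _)
    have hswap : Equiv.swap i j k = k := Equiv.swap_apply_of_ne_of_ne hk1 hk2
    have hfix := hh k (by omega)
    constructor
    · simp [ct, Equiv.Perm.mul_apply, hswap, hfix.1]
    · simp [ct, ct_col, hk1, hk2, hswap, hfix.2]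
  · -- backward membership
    intro π hπ
    rw [mem_Hm] at hπ
    have hij : π.perm⁻¹ j ≤ j := by
      by_contra hcon
      push_neg at hcon
      have : π.perm (π.perm⁻¹ j) = π.perm⁻¹ j :=
        (hπ _ (by rw [Fin.lt_def, hjval] at hcon; omega)).1
      rw [← Equiv.Perm.mul_apply, mul_inv_cancel, Equiv.Perm.one_apply] at this
      rw [← this] at hcon
      exact absurd hcon (lt_irrefl _)
    set i : Fin n := π.perm⁻¹ j with hidef
    set t : ZMod r := if i = j then π.col j else -π.col i with htdef
    simp only [Finset.mem_product, Finset.mem_filter, Finset.mem_univ, true_and,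
      and_true]
    refine ⟨hij, ?_⟩
    rw [mem_Hm]
    intro k hk
    rcases eq_or_ne k j with hkj | hkj
    · subst hkj
      constructor
      · show π.perm ((Equiv.swap i j)⁻¹ j) = j
        rw [Equiv.swap_inv, Equiv.swap_apply_right, hidef, ← Equiv.Perm.mul_apply, mul_inv_cancel, Equiv.Perm.one_apply]
      · show (ct i t j)⁻¹.col j + π.col ((Equiv.swap i j)⁻¹ j) = 0
        rcases eq_or_ne i j with hik | hik
        · simp [inv_col, ct_perm, ct_col, hik, htdef, Equiv.swap_self]
        · simp [inv_col, ct_perm, ct_col, hik, htdef, Equiv.swap_inv,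
            Equiv.swap_apply_right, Ne.symm hik]
    · have hk' : m + 1 ≤ k.val := by
        rcases Nat.lt_or_ge k.val (m+1) with h' | h'
        · exfalso; apply hkj; apply Fin.ext; omega
        · exact h'
      have hfix := hπ k hk'
      have hkgt : j < k := by rw [Fin.lt_def, hjval]; omega
      have hk1 : k ≠ i := fun h' => absurd (h' ▸ lt_of_le_of_lt hij hkgt) (lt_irrefl _)
      have hswap : Equiv.swap i j k = k := Equiv.swap_apply_of_ne_of_ne hk1 hkj
      constructor
      · show π.perm ((Equiv.swap i j)⁻¹ k) = k
        rw [Equiv.swap_inv, hswap, hfix.1]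
      · show (ct i t j)⁻¹.col k + π.col ((Equiv.swap i j)⁻¹ k) = 0
        rw [Equiv.swap_inv, hswap, hfix.2, inv_col]
        simp [ct_perm, Equiv.swap_inv, hswap, ct_col, hk1, hkj]
  · -- left inverse
    rintro ⟨⟨i, t⟩, h⟩ hp
    simp only [Finset.mem_product, Finset.mem_filter, Finset.mem_univ, true_and,
      and_true] at hp
    obtain ⟨hij, hh⟩ := hp
    rw [mem_Hm] at hh
    have hfixj := hh j (le_of_eq hjval.symm)
    have hperm : (h * ct i t j).perm⁻¹ j = i := by
      have : (h * ct i t j).perm i = j := by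
        show h.perm (Equiv.swap i j i) = j
        rw [Equiv.swap_apply_left, hfixj.1]
      rw [Equiv.Perm.inv_eq_iff_eq]
      exact this.symm
    have hcol2 : (if i = j then (h * ct i t j).col j
        else -(h * ct i t j).col i) = t := by
      rcases eq_or_ne i j with hik | hik
      · rw [if_pos hik]
        show (ct i t j).col j + h.col ((ct i t j).perm j) = t
        rw [ct_col, if_pos rfl, ct_perm, Equiv.swap_apply_right, hik, hfixj.2, add_zero]
      · rw [if_neg hik]
        show -((ct i t j).col i + h.col ((ct i t j).perm i)) = t
        rw [ct_col, if_neg hik, if_pos rfl, ct_perm, Equiv.swap_apply_left, hfixj.2]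
        ring
    ext1
    · ext1
      · exact hperm
      · show (if (h * ct i t j).perm⁻¹ j = j then (h * ct i t j).col j
            else -(h * ct i t j).col ((h * ct i t j).perm⁻¹ j)) = t
        rw [hperm]; exact hcol2
    · show (h * ct i t j) *
          (ct ((h * ct i t j).perm⁻¹ j)
            (if (h * ct i t j).perm⁻¹ j = j then (h * ct i t j).col j
              else -(h * ct i t j).col ((h * ct i t j).perm⁻¹ j)) j)⁻¹ = h
      rw [hperm, hcol2, mul_inv_cancel_right]
  · -- right inverse
    intro π hπ
    show π * _⁻¹ * _ = π
    rw [inv_mul_cancel_right]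
  · intro p hp
    rfl

theorem Hm_zero [NeZero r] : Hm (r := r) (n := n) 0 = {1} := by
  ext π
  simp only [Hm, Finset.mem_filter, Finset.mem_univ, true_and, Finset.mem_singleton]
  constructor
  · intro h
    exact ext' (Equiv.ext fun k => (h k (Nat.zero_le _)).1)
      (funext fun k => (h k (Nat.zero_le _)).2)
  · rintro rfl k _
    exact ⟨rfl, rfl⟩

theorem Hm_top [NeZero r] : Hm (r := r) (n := n) n = Finset.univ := by
  ext π
  simp only [Hm, Finset.mem_filter, Finset.mem_univ, true_and, iff_true]
  intro k hk
  exact absurd k.isLt (by omega)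

theorem key [NeZero r] : ∀ m, m ≤ n →
    ((((List.finRange n).map (Phi r n)).take m)).prod
      = ∑ π ∈ Hm (r := r) (n := n) m, MonoidAlgebra.of ℤ (CPerm r n) π := by
  intro m
  induction m with
  | zero =>
    intro _
    simp [Hm_zero, MonoidAlgebra.one_def]
  | succ m ih =>
    intro hm1
    have hm : m < n := hm1
    have hlen : m < ((List.finRange n).map (Phi r n)).length := by
      simpa using hm
    rw [List.prod_take_succ _ _ hlen, ih (le_of_lt hm)]
    have hget : ((List.finRange n).map (Phi r n))[m]'hlen = Phi r n ⟨m, hm⟩ := by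
      simp [List.getElem_map, List.getElem_finRange]
    rw [hget, step m hm]

end CPerm

open CPerm in
/-- `Φ_1 Φ_2 ⋯ Φ_n = Σ_{π ∈ G_{r,n}} π` in the group algebra of `G_{r,n}`. -/
theorem prod_Phi_eq_sum_of_group (r n : ℕ) [NeZero r] :
    ((List.finRange n).map (Phi r n)).prod =
      ∑ π : CPerm r n, MonoidAlgebra.of ℤ (CPerm r n) π := by
  have h := key (r := r) (n := n) n le_rfl
  rw [List.take_of_length_le (by simp)] at h
  rw [h, Hm_top]
end
end
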